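/- (Theorem 1.) Let D_max > 0, let κ₁, …, κ_I > 0 be loss factors, and for each i define D_i(ρ) = max(min(ρ/κ_i − 1, D_max), 0). Fix Lb ≥ 0, set D_i^Lb = ⌊D_i(Lb)⌋ for each i, let ϑ = { i : Lb < (D_max + 1)·κ_i }, and let Ub = min_{i ∈ ϑ} (D_i^Lb + 2)·κ_i if ϑ is nonempty. Then for every real ρ with Lb ≤ ρ, and with ρ < Ub in case ϑ is nonempty, one has ⌊D_i(ρ)⌋ = D_i^Lb for every i = 1, …, I. -/
import Mathlib


/-- **Theorem 1.** With `I` tenant types having loss factors `κ i > 0` and optimal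
deferment thresholds `D i ρ = max(min(ρ/κ i − 1, D_max), 0)`, fix `Lb ≥ 0` and set
`D_i^Lb = ⌊D i Lb⌋`. For every `ρ ≥ Lb` that is below each candidate upper bound
`(D_i^Lb + 2)·κ i` contributed by the indices `i` with `Lb < (D_max + 1)·κ i`
(i.e., `ρ < Ub = min over ϑ` whenever `ϑ ≠ ∅`), one has `⌊D i ρ⌋ = D_i^Lb` for all `i`. -/
theorem floor_deferment_constant_on_subdomain (I : ℕ) (Dmax : ℝ) (hD : 0 < Dmax)
    (κ : Fin I → ℝ) (hκ : ∀ i, 0 < κ i)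
    (Lb : ℝ) (hLb : 0 ≤ Lb) (ρ : ℝ) (hρLb : Lb ≤ ρ)
    (hρUb : ∀ i, Lb < (Dmax + 1) * κ i →
      ρ < ((⌊max (min (Lb / κ i - 1) Dmax) 0⌋ : ℝ) + 2) * κ i) :
    ∀ i, ⌊max (min (ρ / κ i - 1) Dmax) 0⌋ = ⌊max (min (Lb / κ i - 1) Dmax) 0⌋ := by
  intro i
  have hk0 : 0 < κ i := hκ i
  by_cases h : Lb < (Dmax + 1) * κ i
  · have hub := hρUb i h
    set n := ⌊max (min (Lb / κ i - 1) Dmax) 0⌋ with hn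
    have hn0 : (0 : ℤ) ≤ n := Int.le_floor.mpr (by simpa using le_max_right _ (0 : ℝ))
    have hlow : (n : ℝ) ≤ max (min (ρ / κ i - 1) Dmax) 0 := by
      refine le_trans (Int.floor_le _) ?_
      gcongr
    have hupper : max (min (ρ / κ i - 1) Dmax) 0 < (n : ℝ) + 1 := by
      refine max_lt ?_ (by positivity)
      refine lt_of_le_of_lt (min_le_left _ _) ?_
      have : ρ / κ i < (n : ℝ) + 2 := by
        rw [div_lt_iff₀ hk0]
        linarith [hub]
      linarith
    exact Int.floor_eq_iff.mpr ⟨hlow, hupper⟩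
  · push_neg at h
    have hLbmin : min (Lb / κ i - 1) Dmax = Dmax := by
      rw [min_eq_right]
      have := (le_div_iff₀ hk0).mpr h
      linarith
    have hρmin : min (ρ / κ i - 1) Dmax = Dmax := by
      rw [min_eq_right]
      have : (Dmax + 1) * κ i ≤ ρ := le_trans h hρLb
      have : Dmax + 1 ≤ ρ / κ i := (le_div_iff₀ hk0).mpr this
      linarith
    rw [hLbmin, hρmin]
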